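/- For any fixed 0 < a < b, lim_{κ→∞} limsup_{T→∞} Prob{ sup_{t∈[aT, bT]} |Z_t|/r_T ≥ κ } = 0. -/

import Mathlib

open MeasureTheory Filter Real Set ProbabilityTheory

noncomputable section

/-- The `ℓ¹`-norm of a lattice point, as a real number. -/
def lnorm {d : ℕ} (z : Fin d → ℤ) : ℝ := ∑ i, |(z i : ℝ)|

/-- The number of nearest-neighbour lattice paths of length `‖z‖₁` from the origin to `z`. -/
def numPaths (d : ℕ) (z : Fin d → ℤ) : ℕ :=
  Set.ncard {p : Fin (∑ i, (z i).natAbs + 1) → (Fin d → ℤ) |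
    p 0 = 0 ∧ p (Fin.last _) = z ∧
    ∀ i : Fin (∑ i, (z i).natAbs), (∑ j, ((p i.succ j) - (p i.castSucc j)).natAbs) = 1}

/-- `η(z)`: the logarithm of the number of paths of length `‖z‖₁` from `0` to `z`. -/
def pathEntropy {d : ℕ} (z : Fin d → ℤ) : ℝ := Real.log (numPaths d z)

/-- The functional `Φ_t` associated with a potential `ξ`:
`Φ_t(z) = ξ(z) - (|z|/t) log ξ(z) + η(z)/t` if `t ξ(z) ≥ |z|`, and `0` otherwise. -/
def Phi {d : ℕ} (ξ : (Fin d → ℤ) → ℝ) (t : ℝ) (z : Fin d → ℤ) : ℝ :=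
  if lnorm z ≤ t * ξ z then ξ z - lnorm z / t * Real.log (ξ z) + pathEntropy z / t else 0

/-- The spatial scaling function `r_t = (t / log t) ^ (α/(α-d))`. -/
def rScale (α : ℝ) (d : ℕ) (t : ℝ) : ℝ := (t / Real.log t) ^ (α / (α - d))

/-- The scaling function `a_t = (t / log t) ^ (d/(α-d))`. -/
def aScale (α : ℝ) (d : ℕ) (t : ℝ) : ℝ := (t / Real.log t) ^ ((d : ℝ) / (α - d))

/-- The potential `ξ` is a family of i.i.d. Pareto(α) random variables:
they are measurable, independent, and `P {ξ(z) ≤ x} = 1 - x^(-α)` for `x ≥ 1`. -/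
def IsParetoPotential {d : ℕ} {Ω : Type*} [MeasurableSpace Ω] (P : Measure Ω)
    (α : ℝ) (ξ : (Fin d → ℤ) → Ω → ℝ) : Prop :=
  (∀ z, Measurable (ξ z)) ∧
  iIndepFun ξ P ∧
  (∀ z x, 1 ≤ x → P {ω | ξ z ω ≤ x} = ENNReal.ofReal (1 - x ^ (-α)))

/-!
If `|Z_t| ≥ R` for some `t ≤ B`, then `Φ_t(Z_t) ≥ Φ_t(0) > 0` forces `ξ(Z_t) > (|Z_t|/B) m` with
`m = log (R/B) - d log 3`, which is of order `log T` for `R = κ r_T / 2` and `B = bT`. A union bound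
over the sites, using the Pareto tail and a dyadic count of lattice points, bounds the probability
by `(B/m)^α Σ_{|z| ≥ R} |z|^{-α} ≲ (B/m)^α R^{d-α}`, and the choice of `r_T` makes this
`O(κ^{d-α})` uniformly in large `T`.
-/

lemma lnorm_eq_natCast_sum_natAbs {d : ℕ} (z : Fin d → ℤ) :
    lnorm z = ((∑ i, (z i).natAbs : ℕ) : ℝ) := by
  simp only [lnorm, Nat.cast_sum, Nat.cast_natAbs, Int.cast_abs]

lemma abs_le_lnorm {d : ℕ} (z : Fin d → ℤ) (i : Fin d) : |(z i : ℝ)| ≤ lnorm z :=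
  Finset.single_le_sum (f := fun i => |(z i : ℝ)|) (fun _ _ => abs_nonneg _) (Finset.mem_univ i)

lemma numPaths_le (d : ℕ) (z : Fin d → ℤ) : numPaths d z ≤ 3 ^ (d * ∑ i, (z i).natAbs) := by
  classical
  set L := ∑ i, (z i).natAbs
  let steps : (Fin (L + 1) → Fin d → ℤ) → Fin L → Fin d → ℤ :=
    fun p i j => p i.succ j - p i.castSucc j
  let unitSteps : Finset (Fin L → Fin d → ℤ) :=
    Fintype.piFinset fun _ => Fintype.piFinset fun _ => Finset.Icc (-1) 1
  calc numPaths d z ≤ (unitSteps : Set (Fin L → Fin d → ℤ)).ncard := by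
        refine Set.ncard_le_ncard_of_injOn steps ?_ ?_
        · rintro p ⟨-, -, hp⟩
          simp only [unitSteps, Finset.mem_coe, Fintype.mem_piFinset, Finset.mem_Icc]
          intro i j
          have := (Finset.single_le_sum (fun j _ => Nat.zero_le _) (Finset.mem_univ j)).trans
            (hp i).le
          simp only [steps]
          omega
        · rintro p ⟨hp0, -, -⟩ q ⟨hq0, -, -⟩ hpq
          funext k
          induction k using Fin.induction with
          | zero => rw [hp0, hq0]
          | succ i ih =>
            funext j
            have := congrFun (congrFun hpq i) j
            have := congrFun ih j
            simp only [steps] at *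
            omega
    _ = 3 ^ (d * L) := by
        rw [Set.ncard_coe_finset]
        simp [unitSteps, Fintype.card_piFinset, ← pow_mul]

lemma pathEntropy_le {d : ℕ} (z : Fin d → ℤ) : pathEntropy z ≤ d * Real.log 3 * lnorm z := by
  rcases Nat.eq_zero_or_pos (numPaths d z) with h | h
  · simp only [pathEntropy, h, Nat.cast_zero, Real.log_zero]
    rw [lnorm_eq_natCast_sum_natAbs]
    positivity
  · calc pathEntropy z ≤ Real.log ((3 : ℝ) ^ (d * ∑ i, (z i).natAbs)) :=
          Real.log_le_log (by exact_mod_cast h) (by exact_mod_cast numPaths_le d z)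
      _ = d * Real.log 3 * lnorm z := by
          rw [Real.log_pow, lnorm_eq_natCast_sum_natAbs]; push_cast; ring

lemma tsum_ite_lnorm_lt_le {d : ℕ} {ρ : ℝ} (hρ : 0 ≤ ρ) :
    ∑' z : Fin d → ℤ, (if lnorm z < ρ then (1 : ENNReal) else 0) ≤
      ENNReal.ofReal ((2 * ρ + 1) ^ d) := by
  classical
  set n := ⌊ρ⌋₊
  let box : Finset (Fin d → ℤ) := Fintype.piFinset fun _ => Finset.Icc (-n : ℤ) n
  have houtside : ∀ z ∉ box, (if lnorm z < ρ then (1 : ENNReal) else 0) = 0 := by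
    intro z hz
    simp only [box, Fintype.mem_piFinset, Finset.mem_Icc, not_forall] at hz
    obtain ⟨i, hi⟩ := hz
    have hzi : (n : ℝ) + 1 ≤ |(z i : ℝ)| := by
      rw [← Int.cast_abs]; exact_mod_cast (show (n : ℤ) + 1 ≤ |z i| by grind [abs_le])
    have := (Nat.lt_floor_add_one ρ).trans_le (hzi.trans (abs_le_lnorm z i))
    rw [if_neg (by linarith)]
  calc ∑' z, (if lnorm z < ρ then (1 : ENNReal) else 0)
      = ∑ z ∈ box, (if lnorm z < ρ then (1 : ENNReal) else 0) := tsum_eq_sum houtside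
    _ ≤ ∑ _z ∈ box, (1 : ENNReal) := Finset.sum_le_sum fun _ _ => by split_ifs <;> simp
    _ = ((2 * n + 1) ^ d : ℕ) := by
        simp only [box, Finset.sum_const, Fintype.card_piFinset, Int.card_Icc, Finset.prod_const,
          Finset.card_univ, Fintype.card_fin, nsmul_eq_mul, mul_one]
        norm_cast
        congr 2
        omega
    _ ≤ ENNReal.ofReal ((2 * ρ + 1) ^ d) := by
        rw [← ENNReal.ofReal_natCast]
        gcongr
        push_cast
        have := Nat.floor_le hρ
        gcongr

def latticeTailConst (d : ℕ) (α : ℝ) : ℝ := 5 ^ d / (1 - 2 ^ ((d : ℝ) - α))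

lemma latticeTailConst_nonneg {d : ℕ} {α : ℝ} (hα : d < α) : 0 ≤ latticeTailConst d α :=
  div_nonneg (by positivity)
    (sub_nonneg.2 (Real.rpow_le_one_of_one_le_of_nonpos one_le_two (by linarith)))

lemma tsum_ite_le_lnorm_rpow_neg_le {d : ℕ} {α R : ℝ} (hα : d < α) (hR : 1 ≤ R) :
    ∑' z : Fin d → ℤ, (if R ≤ lnorm z then ENNReal.ofReal (lnorm z ^ (-α)) else 0) ≤
      ENNReal.ofReal (latticeTailConst d α * R ^ ((d : ℝ) - α)) := by
  have hR0 : 0 < R := by linarith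
  have hdyadic : ∀ z : Fin d → ℤ, (if R ≤ lnorm z then ENNReal.ofReal (lnorm z ^ (-α)) else 0) ≤
      ∑' k : ℕ, ENNReal.ofReal ((2 ^ k * R) ^ (-α)) *
        (if lnorm z < 2 * (2 ^ k * R) then 1 else 0) := by
    intro z
    split_ifs with hz
    · obtain ⟨k, hk, hk'⟩ := exists_nat_pow_near ((one_le_div hR0).2 hz) one_lt_two
      refine le_trans ?_ (ENNReal.le_tsum k)
      rw [le_div_iff₀ hR0] at hk
      rw [div_lt_iff₀ hR0, pow_succ'] at hk'
      rw [if_pos (by linarith), mul_one]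
      exact ENNReal.ofReal_le_ofReal
        (Real.rpow_le_rpow_of_nonpos (by positivity) hk (by linarith))
    · exact zero_le
  have hterm : ∀ k : ℕ, ENNReal.ofReal ((2 ^ k * R) ^ (-α)) *
      ENNReal.ofReal ((2 * (2 * (2 ^ k * R)) + 1) ^ d) ≤
      ENNReal.ofReal (5 ^ d * R ^ ((d : ℝ) - α) * (2 ^ ((d : ℝ) - α)) ^ k) := by
    intro k
    set x : ℝ := 2 ^ k * R
    have hx : 1 ≤ x := one_le_mul_of_one_le_of_one_le (one_le_pow₀ one_le_two) hR
    rw [← ENNReal.ofReal_mul (by positivity)]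
    refine ENNReal.ofReal_le_ofReal ?_
    calc x ^ (-α) * (2 * (2 * x) + 1) ^ d ≤ x ^ (-α) * (5 * x) ^ d := by gcongr; linarith
      _ = 5 ^ d * x ^ ((d : ℝ) - α) := by
          rw [mul_pow, ← Real.rpow_natCast x, sub_eq_neg_add, Real.rpow_add (by positivity)]
          ring
      _ = 5 ^ d * R ^ ((d : ℝ) - α) * (2 ^ ((d : ℝ) - α)) ^ k := by
          rw [Real.mul_rpow (by positivity) hR0.le, ← Real.rpow_natCast_mul zero_le_two,
            mul_comm (k : ℝ), Real.rpow_mul_natCast zero_le_two]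
          ring
  have hratio : (2 : ℝ) ^ ((d : ℝ) - α) < 1 :=
    Real.rpow_lt_one_of_one_lt_of_neg one_lt_two (by linarith)
  calc ∑' z : Fin d → ℤ, (if R ≤ lnorm z then ENNReal.ofReal (lnorm z ^ (-α)) else 0)
      ≤ ∑' (z : Fin d → ℤ) (k : ℕ), ENNReal.ofReal ((2 ^ k * R) ^ (-α)) *
          (if lnorm z < 2 * (2 ^ k * R) then 1 else 0) := ENNReal.tsum_le_tsum hdyadic
    _ = ∑' k : ℕ, ENNReal.ofReal ((2 ^ k * R) ^ (-α)) *
          ∑' z : Fin d → ℤ, (if lnorm z < 2 * (2 ^ k * R) then 1 else 0) := by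
        rw [ENNReal.tsum_comm]
        simp_rw [ENNReal.tsum_mul_left]
    _ ≤ ∑' k : ℕ, ENNReal.ofReal ((2 ^ k * R) ^ (-α)) *
          ENNReal.ofReal ((2 * (2 * (2 ^ k * R)) + 1) ^ d) := by
        gcongr with k
        exact tsum_ite_lnorm_lt_le (by positivity)
    _ ≤ ∑' k : ℕ, ENNReal.ofReal (5 ^ d * R ^ ((d : ℝ) - α) * (2 ^ ((d : ℝ) - α)) ^ k) :=
        ENNReal.tsum_le_tsum hterm
    _ = ENNReal.ofReal (latticeTailConst d α * R ^ ((d : ℝ) - α)) := by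
        rw [← ENNReal.ofReal_tsum_of_nonneg (fun k => by positivity)
          ((summable_geometric_of_lt_one (by positivity) hratio).mul_left _),
          tsum_mul_left, tsum_geometric_of_lt_one (by positivity) hratio, latticeTailConst]
        congr 1
        ring

lemma Phi_zero_pos {d : ℕ} {ξ : (Fin d → ℤ) → ℝ} {t : ℝ} (ht : 0 < t) (hξ : 0 < ξ 0) :
    0 < Phi ξ t 0 := by
  have hη : 0 ≤ pathEntropy (0 : Fin d → ℤ) / t := div_nonneg (Real.log_natCast_nonneg _) ht.le
  simp only [Phi, lnorm, Pi.zero_apply, Int.cast_zero, abs_zero, Finset.sum_const_zero, zero_div,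
    zero_mul, sub_zero]
  rw [if_pos (by positivity)]
  linarith

/-- `Φ_t(z) > 0` forces `ξ(z) > (|z|/t) (log ξ(z) - d log 3)`, as `η(z) ≤ d log 3 · |z|`, while
`ξ(z) ≥ |z|/t ≥ R/B`. -/
lemma lnorm_div_mul_lt_of_Phi_pos {d : ℕ} {ξ : (Fin d → ℤ) → ℝ} {t B R : ℝ} {z : Fin d → ℤ}
    (hz : 0 < Phi ξ t z) (ht : 0 < t) (htB : t ≤ B) (hR : 0 < R) (hRz : R ≤ lnorm z)
    (hm : 0 ≤ Real.log (R / B) - d * Real.log 3) :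
    lnorm z / B * (Real.log (R / B) - d * Real.log 3) < ξ z := by
  have hB : 0 < B := ht.trans_le htB
  have hz0 : 0 < lnorm z := hR.trans_le hRz
  have hactive : lnorm z ≤ t * ξ z := by
    by_contra h
    simp only [Phi, if_neg h, lt_irrefl] at hz
  simp only [Phi, if_pos hactive] at hz
  have hη : pathEntropy z / t ≤ lnorm z / t * (d * Real.log 3) := by
    rw [div_mul_eq_mul_div, mul_comm (lnorm z)]
    exact div_le_div_of_nonneg_right (pathEntropy_le z) ht.le
  have hzt : lnorm z / B ≤ lnorm z / t := div_le_div_of_nonneg_left hz0.le ht htB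
  have hξz : lnorm z / t ≤ ξ z := (div_le_iff₀' ht).2 hactive
  have hlog : Real.log (R / B) ≤ Real.log (ξ z) :=
    Real.log_le_log (by positivity) ((div_le_div_of_nonneg_right hRz hB.le).trans (hzt.trans hξz))
  calc lnorm z / B * (Real.log (R / B) - d * Real.log 3)
      ≤ lnorm z / t * (Real.log (ξ z) - d * Real.log 3) :=
        mul_le_mul hzt (by linarith) hm (by positivity)
    _ < ξ z := by linarith

lemma exists_mem_lt_of_le_biSup {ι : Type*} {f : ι → ℝ} {s : Set ι} {c κ : ℝ} (hc : 0 ≤ c)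
    (hcκ : c < κ) (h : κ ≤ ⨆ i ∈ s, f i) : ∃ i ∈ s, c < f i := by
  by_contra! hle
  have : (⨆ i ∈ s, f i) ≤ c := Real.iSup_le (fun i => Real.iSup_le (hle i) hc) hc
  linarith

namespace IsParetoPotential

variable {d : ℕ} {Ω : Type*} [MeasurableSpace Ω] {P : Measure Ω} {α : ℝ}
  {ξ : (Fin d → ℤ) → Ω → ℝ}

lemma ae_one_lt (hξ : IsParetoPotential P α ξ) (z : Fin d → ℤ) : ∀ᵐ ω ∂P, 1 < ξ z ω := by
  rw [ae_iff]
  simpa [Real.one_rpow] using hξ.2.2 z 1 le_rfl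

lemma measure_lt_le [IsProbabilityMeasure P] (hξ : IsParetoPotential P α ξ) (hα : 0 ≤ α)
    (z : Fin d → ℤ) {x : ℝ} (hx : 0 < x) : P {ω | x < ξ z ω} ≤ ENNReal.ofReal (x ^ (-α)) := by
  rcases le_or_gt 1 x with hx1 | hx1
  · have htail : x ^ (-α) ≤ 1 := Real.rpow_le_one_of_one_le_of_nonpos hx1 (by linarith)
    have hcompl : {ω | x < ξ z ω} = {ω | ξ z ω ≤ x}ᶜ := by ext; simp
    have hmeas : MeasurableSet {ω | ξ z ω ≤ x} := hξ.1 z measurableSet_Iic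
    rw [hcompl, prob_compl_eq_one_sub hmeas, hξ.2.2 z x hx1,
      ← ENNReal.ofReal_one, ← ENNReal.ofReal_sub _ (by linarith), sub_sub_cancel]
  · calc P {ω | x < ξ z ω} ≤ 1 := prob_le_one
      _ ≤ ENNReal.ofReal (x ^ (-α)) := ENNReal.one_le_ofReal.2
          (Real.one_le_rpow_of_pos_of_le_one_of_nonpos hx hx1.le (by linarith))

lemma measure_exists_lnorm_div_mul_lt_le [IsProbabilityMeasure P] (hξ : IsParetoPotential P α ξ)
    (hα : d < α) {B m R : ℝ} (hB : 0 < B) (hm : 0 < m) (hR : 1 ≤ R) :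
    P {ω | ∃ z, R ≤ lnorm z ∧ lnorm z / B * m < ξ z ω} ≤
      ENNReal.ofReal ((B / m) ^ α * (latticeTailConst d α * R ^ ((d : ℝ) - α))) := by
  have hα0 : 0 ≤ α := (Nat.cast_nonneg d).trans hα.le
  have hsite : ∀ z, P {ω | R ≤ lnorm z ∧ lnorm z / B * m < ξ z ω} ≤
      ENNReal.ofReal ((B / m) ^ α) *
        (if R ≤ lnorm z then ENNReal.ofReal (lnorm z ^ (-α)) else 0) := by
    intro z
    split_ifs with hz
    · have hz0 : 0 < lnorm z := by linarith
      calc P {ω | R ≤ lnorm z ∧ lnorm z / B * m < ξ z ω} ≤ P {ω | lnorm z / B * m < ξ z ω} :=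
            measure_mono fun ω hω => hω.2
        _ ≤ ENNReal.ofReal ((lnorm z / B * m) ^ (-α)) := hξ.measure_lt_le hα0 z (by positivity)
        _ = ENNReal.ofReal ((B / m) ^ α) * ENNReal.ofReal (lnorm z ^ (-α)) := by
            rw [← ENNReal.ofReal_mul (by positivity), div_mul_eq_mul_div, mul_div_assoc,
              Real.mul_rpow hz0.le (by positivity), Real.rpow_neg (div_pos hm hB).le,
              ← Real.inv_rpow (by positivity), inv_div, mul_comm]
    · simp [hz]
  calc P {ω | ∃ z, R ≤ lnorm z ∧ lnorm z / B * m < ξ z ω}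
      = P (⋃ z, {ω | R ≤ lnorm z ∧ lnorm z / B * m < ξ z ω}) := by rw [Set.ofPred_exists]
    _ ≤ ∑' z, P {ω | R ≤ lnorm z ∧ lnorm z / B * m < ξ z ω} := measure_iUnion_le _
    _ ≤ ∑' z, ENNReal.ofReal ((B / m) ^ α) *
          (if R ≤ lnorm z then ENNReal.ofReal (lnorm z ^ (-α)) else 0) := ENNReal.tsum_le_tsum hsite
    _ ≤ ENNReal.ofReal ((B / m) ^ α) *
          ENNReal.ofReal (latticeTailConst d α * R ^ ((d : ℝ) - α)) := by
        rw [ENNReal.tsum_mul_left]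
        gcongr
        exact tsum_ite_le_lnorm_rpow_neg_le hα hR
    _ = _ := (ENNReal.ofReal_mul (by positivity)).symm

lemma measure_exists_lnorm_maximizer_ge_le [IsProbabilityMeasure P]
    (hξ : IsParetoPotential P α ξ) (hα : d < α) {Z : Ω → ℝ → (Fin d → ℤ)}
    (hZ : ∀ᵐ ω ∂P, ∀ t : ℝ, 1 ≤ t →
      ∀ z, Phi (fun w => ξ w ω) t z ≤ Phi (fun w => ξ w ω) t (Z ω t))
    {A B R : ℝ} (hA : 1 ≤ A) (hAB : A ≤ B) (hR : 0 < R)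
    (hm : 0 < Real.log (R / B) - d * Real.log 3) :
    P {ω | ∃ t ∈ Icc A B, R ≤ lnorm (Z ω t)} ≤
      ENNReal.ofReal ((B / (Real.log (R / B) - d * Real.log 3)) ^ α *
        (latticeTailConst d α * R ^ ((d : ℝ) - α))) := by
  have hB : 0 < B := by linarith
  have hRB : B ≤ R := by
    have h3 : 0 ≤ (d : ℝ) * Real.log 3 := by positivity
    exact ((one_lt_div hB).1
      ((Real.log_pos_iff (by positivity)).1 (show 0 < Real.log (R / B) by linarith))).le
  refine (measure_mono_ae ?_).trans
    (hξ.measure_exists_lnorm_div_mul_lt_le hα hB hm (by linarith))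
  filter_upwards [hZ, hξ.ae_one_lt 0] with ω hmax hξ0
  rintro ⟨t, ⟨hAt, htB⟩, hRt⟩
  have ht : 0 < t := by linarith
  have hpos := (Phi_zero_pos ht (zero_lt_one.trans hξ0)).trans_le (hmax t (by linarith) 0)
  exact ⟨Z ω t, hRt, lnorm_div_mul_lt_of_Phi_pos hpos ht htB hR hRt hm.le⟩

end IsParetoPotential

lemma eventually_mul_log_add_le (c₁ c₂ : ℝ) {ε : ℝ} (hε : 0 < ε) :
    ∀ᶠ x in atTop, c₁ * Real.log x + c₂ ≤ ε * x := by
  have hlo : (fun x => c₁ * Real.log x + c₂) =o[atTop] id :=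
    (Real.isLittleO_log_id_atTop.const_mul_left c₁).add (Asymptotics.isLittleO_const_id_atTop c₂)
  filter_upwards [hlo.def hε, eventually_ge_atTop 0] with x hx hx0
  simpa [Real.norm_eq_abs, abs_of_nonneg hx0] using (le_abs_self _).trans hx

lemma log_rScale {α : ℝ} {d : ℕ} {T : ℝ} (hT : 1 < T) :
    Real.log (rScale α d T) = α / (α - d) * (Real.log T - Real.log (Real.log T)) := by
  have hlogT : 0 < Real.log T := Real.log_pos hT
  rw [rScale, Real.log_rpow (div_pos (by linarith) hlogT), Real.log_div (by linarith) hlogT.ne']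

lemma eventually_mul_log_le_log_rScale_div {α b κ : ℝ} {d : ℕ} (hd : 1 ≤ d) (hα : d < α)
    (hb : 0 < b) (hκ : 2 ≤ κ) :
    ∀ᶠ T in atTop, d / (α - d) / 2 * Real.log T ≤
      Real.log (κ * rScale α d T / 2 / (b * T)) - d * Real.log 3 := by
  set q : ℝ := d / (α - d)
  have hq : 0 < q := div_pos (by exact_mod_cast hd) (by linarith)
  have hq1 : α / (α - d) = q + 1 := by
    have : α - d ≠ 0 := by linarith
    simp only [q]; field_simp; ring
  filter_upwards [eventually_gt_atTop 1, Real.tendsto_log_atTop.eventually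
    (eventually_mul_log_add_le (q + 1) (Real.log b + d * Real.log 3) (half_pos hq))]
    with T hT hloglog
  have hr : 0 < rScale α d T := Real.rpow_pos_of_pos (div_pos (by linarith) (Real.log_pos hT)) _
  have hκ2 : 0 ≤ Real.log (κ / 2) := Real.log_nonneg (by linarith)
  rw [show κ * rScale α d T / 2 / (b * T) = κ / 2 * rScale α d T / (b * T) by ring,
    Real.log_div (by positivity) (by positivity), Real.log_mul (by positivity) hr.ne',
    Real.log_mul hb.ne' (by linarith), log_rScale hT, hq1]
  linarith

lemma div_rpow_mul_rScale_rpow_le {α b c κ T m : ℝ} {d : ℕ} (hα : d < α) (hT : 1 < T)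
    (hb : 0 < b) (hc : 0 < c) (hκ : 0 < κ) (hm : c * Real.log T ≤ m) :
    (b * T / m) ^ α * (κ * rScale α d T / 2) ^ ((d : ℝ) - α) ≤
      (b / c) ^ α * (κ / 2) ^ ((d : ℝ) - α) := by
  have hlogT : 0 < Real.log T := Real.log_pos hT
  set s := T / Real.log T
  have hs : 0 < s := div_pos (by linarith) hlogT
  have hα0 : 0 < α := (Nat.cast_nonneg d).trans_lt hα
  have hαd : α - d ≠ 0 := by linarith
  have hm0 : 0 < m := (mul_pos hc hlogT).trans_le hm
  have hr0 : 0 < rScale α d T := Real.rpow_pos_of_pos hs _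
  have hr : rScale α d T ^ ((d : ℝ) - α) = s ^ (-α) := by
    rw [rScale, ← Real.rpow_mul hs.le]
    congr 1
    field_simp
    ring
  have hBm : b * T / m ≤ b / c * s := by
    calc b * T / m ≤ b * T / (c * Real.log T) :=
          div_le_div_of_nonneg_left (by positivity) (by positivity) hm
      _ = b / c * s := (div_mul_div_comm _ _ _ _).symm
  calc (b * T / m) ^ α * (κ * rScale α d T / 2) ^ ((d : ℝ) - α)
      ≤ (b / c * s) ^ α * (κ * rScale α d T / 2) ^ ((d : ℝ) - α) := by
        gcongr
    _ = (b / c) ^ α * (κ / 2) ^ ((d : ℝ) - α) * (s ^ α * s ^ (-α)) := by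
        rw [Real.mul_rpow (by positivity) hs.le, mul_div_right_comm,
          Real.mul_rpow (by positivity) hr0.le, hr]
        ring
    _ = (b / c) ^ α * (κ / 2) ^ ((d : ℝ) - α) := by
        rw [Real.rpow_neg hs.le, mul_inv_cancel₀ (Real.rpow_pos_of_pos hs α).ne', mul_one]

lemma exists_limsup_measure_le_rpow {d : ℕ} (hd : 1 ≤ d) {α : ℝ} (hα : (d : ℝ) < α)
    {Ω : Type*} [MeasurableSpace Ω] {P : Measure Ω} [IsProbabilityMeasure P]
    {ξ : (Fin d → ℤ) → Ω → ℝ} (hξ : IsParetoPotential P α ξ) {Z : Ω → ℝ → (Fin d → ℤ)}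
    (hZ : ∀ᵐ ω ∂P, ∀ t : ℝ, 1 ≤ t →
      ∀ z, Phi (fun w => ξ w ω) t z ≤ Phi (fun w => ξ w ω) t (Z ω t))
    {a b : ℝ} (ha : 0 < a) (hab : a < b) :
    ∃ K : ℝ, ∀ κ : ℝ, 2 ≤ κ →
      limsup (fun T : ℝ =>
        P {ω | κ ≤ ⨆ t ∈ Icc (a * T) (b * T), lnorm (Z ω t) / rScale α d T}) atTop ≤
        ENNReal.ofReal (K * (κ / 2) ^ ((d : ℝ) - α)) := by
  set C := latticeTailConst d α
  set c : ℝ := d / (α - d) / 2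
  have hb : 0 < b := ha.trans hab
  have hc : 0 < c := half_pos (div_pos (by exact_mod_cast hd) (by linarith))
  refine ⟨C * (b / c) ^ α, fun κ hκ => limsup_le_of_le (by isBoundedDefault) ?_⟩
  filter_upwards [eventually_gt_atTop 1, (tendsto_id.const_mul_atTop ha).eventually_ge_atTop 1,
    eventually_mul_log_le_log_rScale_div hd hα hb hκ] with T hT haT hm
  set r := rScale α d T
  have hr : 0 < r := Real.rpow_pos_of_pos (div_pos (by linarith) (Real.log_pos hT)) _
  have hm0 : 0 < Real.log (κ * r / 2 / (b * T)) - d * Real.log 3 :=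
    (mul_pos hc (Real.log_pos hT)).trans_le hm
  calc P {ω | κ ≤ ⨆ t ∈ Icc (a * T) (b * T), lnorm (Z ω t) / r}
      ≤ P {ω | ∃ t ∈ Icc (a * T) (b * T), κ * r / 2 ≤ lnorm (Z ω t)} := by
        refine measure_mono fun ω hω => ?_
        obtain ⟨t, ht, hlt⟩ :=
          exists_mem_lt_of_le_biSup (by positivity) (half_lt_self (by linarith)) hω
        exact ⟨t, ht, by rw [lt_div_iff₀ hr] at hlt; linarith⟩
    _ ≤ _ := hξ.measure_exists_lnorm_maximizer_ge_le hα hZ haT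
          (mul_le_mul_of_nonneg_right hab.le (by linarith)) (by positivity) hm0
    _ ≤ ENNReal.ofReal (C * (b / c) ^ α * (κ / 2) ^ ((d : ℝ) - α)) := by
        refine ENNReal.ofReal_le_ofReal ?_
        rw [mul_left_comm, mul_assoc]
        exact mul_le_mul_of_nonneg_left
          (div_rpow_mul_rScale_rpow_le hα hT hb hc (by linarith) hm) (latticeTailConst_nonneg hα)

theorem maximizer_in_box_general (d : ℕ) (hd : 1 ≤ d) (α : ℝ) (hα : (d:ℝ) < α)
    {Ω : Type*} [MeasurableSpace Ω] (P : Measure Ω) [IsProbabilityMeasure P]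
    (ξ : (Fin d → ℤ) → Ω → ℝ) (hξ : IsParetoPotential P α ξ)
    (Z : Ω → ℝ → (Fin d → ℤ))
    (hZ : ∀ᵐ ω ∂P, ∀ t : ℝ, 1 ≤ t →
        (∀ z, Phi (fun w => ξ w ω) t z ≤ Phi (fun w => ξ w ω) t (Z ω t)) ∧
        (∀ᶠ s in nhdsWithin t (Set.Ici t), Z ω s = Z ω t))
    (a b : ℝ) (ha : 0 < a) (hab : a < b) :
    Tendsto (fun κ : ℝ =>
        Filter.limsup (fun T : ℝ =>
          P {ω | κ ≤ ⨆ t ∈ Set.Icc (a * T) (b * T), lnorm (Z ω t) / rScale α d T}) atTop)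
      atTop (nhds 0) := by
  obtain ⟨K, hK⟩ := exists_limsup_measure_le_rpow hd hα hξ
    (hZ.mono fun ω h t ht => (h t ht).1) ha hab
  have hdecay :
      Tendsto (fun κ : ℝ => ENNReal.ofReal (K * (κ / 2) ^ ((d : ℝ) - α))) atTop (nhds 0) := by
    have h := (tendsto_rpow_neg_atTop (sub_pos.2 hα)).comp (tendsto_id.atTop_div_const two_pos)
    simpa [neg_sub] using ENNReal.tendsto_ofReal (h.const_mul K)
  refine tendsto_of_tendsto_of_tendsto_of_le_of_le' tendsto_const_nhds hdecay
    (Eventually.of_forall fun _ => zero_le) ?_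
  filter_upwards [eventually_ge_atTop 2] with κ hκ using hK κ hκ

/-- **The maximizer stays in a box of side `O(r_T)` on `[aT, bT]`.**
For fixed `0 < a < b`, `lim_{κ→∞} limsup_{T→∞} Prob {sup_{t∈[aT,bT]} |Z_t|/r_T ≥ κ} = 0`. -/
theorem maximizer_in_box (d : ℕ) (hd : 1 ≤ d) (α : ℝ) (hα : (d:ℝ) < α)
    {Ω : Type*} [MeasurableSpace Ω] (P : Measure Ω) [IsProbabilityMeasure P]
    (ξ : (Fin d → ℤ) → Ω → ℝ) (hξ : IsParetoPotential P α ξ)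
    (Z : Ω → ℝ → (Fin d → ℤ))
    (hZmeas : ∀ t : ℝ, Measurable (fun ω => Z ω t))
    (hZ : ∀ᵐ ω ∂P, ∀ t : ℝ, 1 ≤ t →
        (∀ z, Phi (fun w => ξ w ω) t z ≤ Phi (fun w => ξ w ω) t (Z ω t)) ∧
        (∀ᶠ s in nhdsWithin t (Set.Ici t), Z ω s = Z ω t))
    (a b : ℝ) (ha : 0 < a) (hab : a < b) :
    Tendsto (fun κ : ℝ =>
        Filter.limsup (fun T : ℝ =>
          P {ω | κ ≤ ⨆ t ∈ Set.Icc (a * T) (b * T), lnorm (Z ω t) / rScale α d T}) atTop)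
      atTop (nhds 0) :=
  maximizer_in_box_general d hd α hα P ξ hξ Z hZ a b ha hab
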